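/- arXiv:1107.2565 — 4 statements merged into one kernel-verified Lean document; each statement's English description precedes it below -/
import Mathlib

section
/- Let m ≥ 1, let λ_1, …, λ_m be pairwise distinct real numbers, let w ≠ 0 be real, and let H be the m×m matrix with entries H_{pq} = λ_q^{p−1} w^{1−p}. Let c_0, …, c_{m−1} and τ_1, …, τ_m be real numbers such that τ^m − Σ_{j=0}^{m−1} c_j τ^j = ∏_{i=1}^m (τ − τ_i) as polynomials in τ, and let A be the m×m matrix with only nonzero entries A_{p,p+1} = w (p = 1, …, m−1) and A_{m,q} = c_{q−1} w^{q−m} (q = 1, …, m). Then for all p ≠ q the entries of H^{−1}AH are given by (H^{−1}AH)_{pq} = (τ_q − λ_q) · ∏_{i=1, i≠q}^m (τ_i − λ_q) / ∏_{i=1, i≠p}^m (λ_i − λ_p). -/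
open Finset Polynomial Matrix
open scoped BigOperators

-- leading coeff of Lagrange basis
lemma basis_coeff_top (m : ℕ) (lam : Fin m → ℝ) (hdist : Function.Injective lam) (r : Fin m) :
    (Lagrange.basis Finset.univ lam r).coeff (m - 1)
      = (∏ i ∈ Finset.univ.erase r, (lam r - lam i))⁻¹ := by
  have hvs : Set.InjOn lam ↑(Finset.univ : Finset (Fin m)) := hdist.injOn
  have hnd : (Lagrange.basis Finset.univ lam r).natDegree = m - 1 := by
    simpa using Lagrange.natDegree_basis hvs (mem_univ r)
  rw [← hnd, Polynomial.coeff_natDegree]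
  unfold Lagrange.basis
  rw [Polynomial.leadingCoeff_prod, ← Finset.prod_inv_distrib]
  refine Finset.prod_congr rfl fun j hj => ?_
  have hne : lam r ≠ lam j := fun h => (mem_erase.mp hj).1 (hdist h.symm)
  unfold Lagrange.basisDivisor
  rw [Polynomial.leadingCoeff_mul, Polynomial.leadingCoeff_C,
    (Polynomial.monic_X_sub_C _).leadingCoeff, mul_one]

lemma lag_sum (m : ℕ) (hm : 1 ≤ m) (lam : Fin m → ℝ) (hdist : Function.Injective lam)
    (p : ℕ) (hp : p < m) :
    ∑ r : Fin m, lam r ^ p * (∏ i ∈ Finset.univ.erase r, (lam r - lam i))⁻¹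
      = if p = m - 1 then 1 else 0 := by
  have hvs : Set.InjOn lam ↑(Finset.univ : Finset (Fin m)) := hdist.injOn
  have hcard : #(Finset.univ : Finset (Fin m)) = m := by simp
  have hdeg : ((X : ℝ[X]) ^ p).degree < #(Finset.univ : Finset (Fin m)) := by
    rw [hcard, Polynomial.degree_X_pow]
    exact_mod_cast hp
  have hinterp := Lagrange.eq_interpolate (f := (X : ℝ[X]) ^ p) hvs hdeg
  have := congrArg (fun f => Polynomial.coeff f (m - 1)) hinterp
  simp only [Lagrange.interpolate_apply, Polynomial.eval_pow, Polynomial.eval_X,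
    Polynomial.finset_sum_coeff, Polynomial.coeff_C_mul, Polynomial.coeff_X_pow] at this
  rw [Finset.sum_congr rfl (fun r _ => by rw [basis_coeff_top m lam hdist r])] at this
  by_cases h : p = m - 1
  · rw [if_pos h, ← this, if_pos h.symm]
  · rw [if_neg h, ← this, if_neg (fun hh => h hh.symm)]


/-- **Off-diagonal entries of `H⁻¹AH`** (Garetto–Ruzhansky, Proposition, part (iii)).
With `H` the scaled Vandermonde matrix of the pairwise distinct `λ_i` and `A` the scaled
companion matrix whose characteristic roots are `τ_1,…,τ_m`, for `p ≠ q` one has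
`(H⁻¹AH)_{pq} = (τ_q - λ_q) ∏_{i≠q}(τ_i - λ_q) / ∏_{i≠p}(λ_i - λ_p)`. -/
theorem stmt14 (m : ℕ) (hm : 1 ≤ m) (lam : Fin m → ℝ)
    (hdist : Function.Injective lam) (w : ℝ) (hw : w ≠ 0)
    (H : Matrix (Fin m) (Fin m) ℝ)
    (hH : ∀ p q : Fin m, H p q = lam q ^ (p : ℕ) * (w ^ (p : ℕ))⁻¹)
    (c : Fin m → ℝ) (τ : Fin m → ℝ)
    (hpoly : ∀ z : ℝ, z ^ m - ∑ j : Fin m, c j * z ^ (j : ℕ) = ∏ i : Fin m, (z - τ i))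
    (A : Matrix (Fin m) (Fin m) ℝ)
    (hA : ∀ p q : Fin m, A p q =
      if (p : ℕ) + 1 = m then c q * w ^ (((q : ℕ) : ℤ) + 1 - (m : ℤ))
      else if (q : ℕ) = (p : ℕ) + 1 then w else 0) :
    ∀ p q : Fin m, p ≠ q →
      (H⁻¹ * A * H) p q
        = (τ q - lam q) * (∏ i ∈ Finset.univ.erase q, (τ i - lam q))
          * (∏ i ∈ Finset.univ.erase p, (lam i - lam p))⁻¹ := by
  have key := lag_sum m hm lam hdist
  set M : Matrix (Fin m) (Fin m) ℝ := Matrix.of (fun p q : Fin m =>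
    (if p = q then lam q else 0)
      - (∏ i, (lam q - τ i)) * (∏ i ∈ Finset.univ.erase p, (lam p - lam i))⁻¹) with hMdef
  have hHM : H * M = A * H := by
    ext p q
    have hpm : (p : ℕ) < m := p.isLt
    have hLHS : (H * M) p q
        = (w ^ (p : ℕ))⁻¹ * (lam q ^ ((p : ℕ) + 1)
            - (∏ i, (lam q - τ i)) * (if (p : ℕ) = m - 1 then 1 else 0)) := by
      rw [Matrix.mul_apply]
      have expand : ∀ r : Fin m, H p r * M r q
          = (if r = q then lam q ^ ((p : ℕ) + 1) * (w ^ (p : ℕ))⁻¹ else 0)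
            - (∏ i, (lam q - τ i)) * (w ^ (p : ℕ))⁻¹
              * (lam r ^ (p : ℕ) * (∏ i ∈ Finset.univ.erase r, (lam r - lam i))⁻¹) := by
        intro r
        rw [hH, hMdef]
        simp only [Matrix.of_apply]
        by_cases h : r = q
        · subst h; rw [if_pos rfl, if_pos rfl]; ring
        · rw [if_neg h, if_neg h]; ring
      rw [Finset.sum_congr rfl fun r _ => expand r, Finset.sum_sub_distrib,
        Finset.sum_ite_eq' Finset.univ q, ← Finset.mul_sum, key (p : ℕ) hpm]
      simp only [mem_univ, if_pos]
      ring
    rw [hLHS, Matrix.mul_apply]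
    by_cases hpm1 : (p : ℕ) + 1 = m
    · have hp' : (p : ℕ) = m - 1 := by omega
      rw [if_pos hp']
      have hwpow : ∀ r : Fin m, w ^ (((r : ℕ) : ℤ) + 1 - (m : ℤ)) * (w ^ (r : ℕ))⁻¹
          = (w ^ (m - 1 : ℕ))⁻¹ := by
        intro r
        rw [← zpow_natCast w (r : ℕ), ← _root_.zpow_neg, ← zpow_add₀ hw]
        have h1 : ((r : ℕ) : ℤ) + 1 - (m : ℤ) + (-(r : ℕ)) = -(((m - 1 : ℕ) : ℤ)) := by
          have : ((m - 1 : ℕ) : ℤ) = (m : ℤ) - 1 := by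
            omega
          omega
        rw [h1, _root_.zpow_neg, zpow_natCast]
      have expand : ∀ r : Fin m, A p r * H r q
          = (c r * lam q ^ (r : ℕ)) * (w ^ (m - 1 : ℕ))⁻¹ := by
        intro r
        rw [hA, hH, if_pos hpm1]
        calc c r * w ^ (((r : ℕ) : ℤ) + 1 - (m : ℤ)) * (lam q ^ (r : ℕ) * (w ^ (r : ℕ))⁻¹)
            = c r * lam q ^ (r : ℕ)
              * (w ^ (((r : ℕ) : ℤ) + 1 - (m : ℤ)) * (w ^ (r : ℕ))⁻¹) := by ring
          _ = (c r * lam q ^ (r : ℕ)) * (w ^ (m - 1 : ℕ))⁻¹ := by rw [hwpow r]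
      rw [Finset.sum_congr rfl fun r _ => expand r, ← Finset.sum_mul]
      have hsum : ∑ r : Fin m, c r * lam q ^ (r : ℕ)
          = lam q ^ m - ∏ i, (lam q - τ i) := by
        have := hpoly (lam q); linarith
      rw [hsum, hp']
      have hm1 : m - 1 + 1 = m := by omega
      rw [hm1, mul_one]
      ring
    · have hplt : (p : ℕ) + 1 < m := by omega
      have hpne : ¬ ((p : ℕ) = m - 1) := by omega
      rw [if_neg hpne]
      set p1 : Fin m := ⟨(p : ℕ) + 1, hplt⟩ with hp1
      have expand : ∀ r : Fin m, A p r * H r q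
          = if r = p1 then w * (lam q ^ ((p : ℕ) + 1) * (w ^ ((p : ℕ) + 1))⁻¹) else 0 := by
        intro r
        rw [hA, hH, if_neg hpm1]
        by_cases h : r = p1
        · subst h; rw [if_pos rfl, if_pos rfl]
        · rw [if_neg (fun hh => h (Fin.ext hh)), if_neg h, zero_mul]
      rw [Finset.sum_congr rfl fun r _ => expand r, Finset.sum_ite_eq' Finset.univ p1]
      simp only [mem_univ, if_pos]
      rw [mul_zero, sub_zero, pow_succ w, mul_inv]
      field_simp
  have hdet : IsUnit H.det := by
    have hHfac : H = Matrix.diagonal (fun p : Fin m => (w ^ (p : ℕ))⁻¹)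
        * (Matrix.vandermonde lam)ᵀ := by
      ext p q
      rw [Matrix.diagonal_mul, Matrix.transpose_apply, Matrix.vandermonde_apply, hH]
      ring
    rw [hHfac, Matrix.det_mul, Matrix.det_transpose, Matrix.det_diagonal]
    refine isUnit_iff_ne_zero.mpr (mul_ne_zero ?_ ?_)
    · exact Finset.prod_ne_zero_iff.mpr fun i _ => inv_ne_zero (pow_ne_zero _ hw)
    · exact Matrix.det_vandermonde_ne_zero_iff.mpr hdist
  have hconj : H⁻¹ * A * H = M := by
    calc H⁻¹ * A * H = H⁻¹ * (A * H) := by rw [Matrix.mul_assoc]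
      _ = H⁻¹ * (H * M) := by rw [hHM]
      _ = (H⁻¹ * H) * M := by rw [Matrix.mul_assoc]
      _ = M := by rw [Matrix.nonsing_inv_mul H hdet, Matrix.one_mul]
  intro p q hpq
  rw [hconj, hMdef]
  simp only [Matrix.of_apply, if_neg hpq]
  have h1 : (τ q - lam q) * ∏ i ∈ Finset.univ.erase q, (τ i - lam q)
      = ∏ i, (τ i - lam q) := Finset.mul_prod_erase Finset.univ (fun i => τ i - lam q) (mem_univ q)
  have h2 : (∏ i : Fin m, (τ i - lam q)) = (-1 : ℝ) ^ m * ∏ i, (lam q - τ i) := by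
    calc (∏ i : Fin m, (τ i - lam q)) = ∏ i : Fin m, ((-1) * (lam q - τ i)) :=
          Finset.prod_congr rfl fun i _ => by ring
      _ = (∏ _i : Fin m, (-1 : ℝ)) * ∏ i, (lam q - τ i) := Finset.prod_mul_distrib
      _ = (-1 : ℝ) ^ m * ∏ i, (lam q - τ i) := by
          rw [Finset.prod_const, Finset.card_univ, Fintype.card_fin]
  have h3 : (∏ i ∈ Finset.univ.erase p, (lam i - lam p))
      = (-1 : ℝ) ^ (m - 1) * ∏ i ∈ Finset.univ.erase p, (lam p - lam i) := by
    calc (∏ i ∈ Finset.univ.erase p, (lam i - lam p))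
        = ∏ i ∈ Finset.univ.erase p, ((-1) * (lam p - lam i)) :=
          Finset.prod_congr rfl fun i _ => by ring
      _ = (∏ _i ∈ Finset.univ.erase p, (-1 : ℝ))
            * ∏ i ∈ Finset.univ.erase p, (lam p - lam i) := Finset.prod_mul_distrib
      _ = (-1 : ℝ) ^ (m - 1) * ∏ i ∈ Finset.univ.erase p, (lam p - lam i) := by
          rw [Finset.prod_const, Finset.card_erase_of_mem (mem_univ p), Finset.card_univ,
            Fintype.card_fin]
  rw [h1, h2, h3, mul_inv]
  have hsign : ((-1 : ℝ) ^ (m - 1))⁻¹ = (-1 : ℝ) ^ (m - 1) := by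
    rw [← inv_pow, inv_neg, inv_one]
  rw [hsign]
  have hmsucc : m = (m - 1) + 1 := by omega
  have hpow : (-1 : ℝ) ^ m = (-1 : ℝ) ^ (m - 1) * (-1) := by
    conv_lhs => rw [hmsucc]
    rw [pow_succ]
  rw [hpow]
  have hsq : (-1 : ℝ) ^ (m - 1) * (-1 : ℝ) ^ (m - 1) = 1 := by
    rw [← pow_add, ← two_mul, pow_mul]; norm_num
  set P := ∏ i, (lam q - τ i)
  set D := (∏ i ∈ Finset.univ.erase p, (lam p - lam i))⁻¹
  linear_combination P * D * hsq
end

section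
/- Let m ≥ 1, let λ_1, …, λ_m be pairwise distinct real numbers, let w ≠ 0 be real, and let H be the m×m matrix with entries H_{pq} = λ_q^{p−1} w^{1−p}. Let e_0, …, e_{m−1} be given scalars, set g(τ) = Σ_{j=0}^{m−1} e_j τ^j, and let B be the m×m matrix whose only nonzero entries are in the last row: B_{m,q} = e_{q−1} w^{q−m} for q = 1, …, m. Then for all 1 ≤ p, q ≤ m, (H^{−1}BH)_{pq} = (−1)^{m−1} g(λ_q) · (∏_{i=1, i≠p}^m (λ_i − λ_p))^{−1}. -/
open Finset
open scoped BigOperators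

open Polynomial in
lemma lagrange_coeff_sum_aux (m : ℕ) (lam : Fin m → ℝ)
    (hdist : Function.Injective lam) (p : Fin m) :
    ∑ k : Fin m, lam k ^ (p : ℕ) * (∏ i ∈ Finset.univ.erase k, (lam k - lam i))⁻¹
      = if (p : ℕ) = m - 1 then 1 else 0 := by
  have hinj : Set.InjOn lam (Finset.univ : Finset (Fin m)) := hdist.injOn
  have hcard : (Finset.univ : Finset (Fin m)).card = m := by simp
  have hdeg : ((X : ℝ[X]) ^ (p : ℕ)).degree < ((Finset.univ : Finset (Fin m)).card : ℕ) := by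
    rw [degree_X_pow, hcard]
    exact_mod_cast p.2
  have h := Lagrange.eq_interpolate hinj hdeg
  have hc := congrArg (fun f : ℝ[X] => f.coeff (m - 1)) h
  simp only [Lagrange.interpolate_apply] at hc
  rw [coeff_X_pow, finset_sum_coeff] at hc
  have hterm : ∀ k : Fin m,
      (C (eval (lam k) ((X:ℝ[X]) ^ (p:ℕ))) * Lagrange.basis Finset.univ lam k).coeff (m-1)
      = lam k ^ (p:ℕ) * (∏ i ∈ Finset.univ.erase k, (lam k - lam i))⁻¹ := by
    intro k
    have hnd : (Lagrange.basis Finset.univ lam k).natDegree = m - 1 := by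
      rw [Lagrange.natDegree_basis hinj (Finset.mem_univ k), hcard]
    have hlc : (Lagrange.basis Finset.univ lam k).coeff (m-1)
        = ∏ i ∈ Finset.univ.erase k, (lam k - lam i)⁻¹ := by
      rw [← hnd, ← leadingCoeff, Lagrange.basis, leadingCoeff_prod]
      refine Finset.prod_congr rfl fun i _ => ?_
      rw [Lagrange.basisDivisor, leadingCoeff_mul, leadingCoeff_C,
        (monic_X_sub_C (lam i)).leadingCoeff, mul_one]
    rw [coeff_C_mul, hlc, eval_pow, eval_X, ← Finset.prod_inv_distrib]
  rw [Finset.sum_congr rfl fun k _ => hterm k] at hc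
  rw [← hc]
  by_cases hp : (p:ℕ) = m - 1
  · rw [if_pos hp, if_pos hp.symm]
  · rw [if_neg hp, if_neg (Ne.symm hp)]

/-- **Entries of `H⁻¹BH`** (Garetto–Ruzhansky, Proposition, part (iv)).
With `H` the scaled Vandermonde matrix of the pairwise distinct `λ_i` and `B` the
lower-order-terms matrix whose only nonzero row is the last one, `B_{m,q} = e_{q-1} w^{q-m}`,
one has `(H⁻¹BH)_{pq} = (-1)^{m-1} g(λ_q) (∏_{i≠p}(λ_i - λ_p))⁻¹` where
`g(τ) = Σ_{j=0}^{m-1} e_j τ^j`. -/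
theorem stmt15 (m : ℕ) (hm : 1 ≤ m) (lam : Fin m → ℝ)
    (hdist : Function.Injective lam) (w : ℝ) (hw : w ≠ 0)
    (H : Matrix (Fin m) (Fin m) ℝ)
    (hH : ∀ p q : Fin m, H p q = lam q ^ (p : ℕ) * (w ^ (p : ℕ))⁻¹)
    (e : Fin m → ℝ)
    (B : Matrix (Fin m) (Fin m) ℝ)
    (hB : ∀ p q : Fin m, B p q =
      if (p : ℕ) + 1 = m then e q * w ^ (((q : ℕ) : ℤ) + 1 - (m : ℤ)) else 0) :
    ∀ p q : Fin m,
      (H⁻¹ * B * H) p q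
        = (-1) ^ (m - 1) * (∑ j : Fin m, e j * lam q ^ (j : ℕ))
          * (∏ i ∈ Finset.univ.erase p, (lam i - lam p))⁻¹ := by
  classical
  set T : Matrix (Fin m) (Fin m) ℝ := Matrix.of fun p q =>
    (-1) ^ (m - 1) * (∑ j : Fin m, e j * lam q ^ (j : ℕ))
      * (∏ i ∈ Finset.univ.erase p, (lam i - lam p))⁻¹ with hTdef
  suffices h : H⁻¹ * B * H = T by
    intro p q; rw [h]; rfl
  -- H is invertible
  have hHeq : H = Matrix.diagonal (fun p : Fin m => (w ^ (p:ℕ))⁻¹) * (Matrix.vandermonde lam).transpose := by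
    ext p q
    rw [Matrix.diagonal_mul, Matrix.transpose_apply, Matrix.vandermonde_apply, hH, mul_comm]
  have hdet : IsUnit H.det := by
    rw [hHeq, Matrix.det_mul, Matrix.det_diagonal, Matrix.det_transpose]
    refine (IsUnit.mul ?_ ?_)
    · exact (Finset.prod_ne_zero_iff.mpr fun i _ => inv_ne_zero (pow_ne_zero _ hw)).isUnit
    · exact (Matrix.det_vandermonde_ne_zero_iff.mpr hdist).isUnit
  haveI := H.invertibleOfIsUnitDet hdet
  rw [mul_assoc, Matrix.inv_mul_eq_iff_eq_mul_of_invertible]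
  ext p q
  rw [Matrix.mul_apply, Matrix.mul_apply]
  have key := lagrange_coeff_sum_aux m lam hdist p
  have hflip : ∀ k : Fin m, (∏ i ∈ Finset.univ.erase k, (lam i - lam k))
      = (-1:ℝ)^(m-1) * ∏ i ∈ Finset.univ.erase k, (lam k - lam i) := by
    intro k
    have hc : (Finset.univ.erase k).card = m - 1 := by
      rw [Finset.card_erase_of_mem (Finset.mem_univ k)]; simp
    calc ∏ i ∈ Finset.univ.erase k, (lam i - lam k)
        = ∏ i ∈ Finset.univ.erase k, ((-1) * (lam k - lam i)) := by
          refine Finset.prod_congr rfl fun i _ => ?_; ring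
      _ = (-1:ℝ)^(m-1) * ∏ i ∈ Finset.univ.erase k, (lam k - lam i) := by
          rw [Finset.prod_mul_distrib, Finset.prod_const, hc]
  have h1 : ((-1:ℝ))^(m-1) * ((-1:ℝ))^(m-1) = 1 := by
    rw [← pow_add]
    exact Even.neg_one_pow ⟨m-1, rfl⟩
  have hR : ∑ k, H p k * T k q
      = (if (p:ℕ) = m-1 then (1:ℝ) else 0)
        * ((w ^ (p:ℕ))⁻¹ * (∑ j : Fin m, e j * lam q ^ (j:ℕ))) := by
    rw [← key, Finset.sum_mul]
    refine Finset.sum_congr rfl fun k _ => ?_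
    rw [hH, hTdef, Matrix.of_apply, hflip k, mul_inv]
    rw [show ((-1:ℝ)^(m-1))⁻¹ = (-1:ℝ)^(m-1) by rw [← inv_pow, inv_neg, inv_one]]
    linear_combination lam k ^ (p:ℕ) * (w ^ (p:ℕ))⁻¹
      * (∑ j : Fin m, e j * lam q ^ (j:ℕ))
      * (∏ i ∈ Finset.univ.erase k, (lam k - lam i))⁻¹ * h1
  have hL : ∑ k, B p k * H k q
      = (if (p:ℕ)+1 = m then (1:ℝ) else 0)
        * (w ^ ((1:ℤ) - m) * ∑ j : Fin m, e j * lam q ^ (j:ℕ)) := by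
    by_cases hp : (p:ℕ)+1 = m
    · simp only [hB, hH, hp, if_true, one_mul, Finset.mul_sum]
      refine Finset.sum_congr rfl fun k _ => ?_
      have hz : w ^ (((k:ℕ):ℤ)+1-(m:ℤ)) = w ^ ((k:ℕ):ℤ) * w ^ ((1:ℤ)-m) := by
        rw [← zpow_add₀ hw]; ring_nf
      rw [hz, ← zpow_natCast w (k:ℕ)]
      have h2 : w ^ ((k:ℕ):ℤ) * (w ^ ((k:ℕ):ℤ))⁻¹ = 1 := mul_inv_cancel₀ (zpow_ne_zero _ hw)
      linear_combination e k * w ^ ((1:ℤ)-(m:ℤ)) * lam q ^ (k:ℕ) * h2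
    · simp [hB, hp]
  rw [hL, hR]
  by_cases hp : (p:ℕ)+1 = m
  · have hp' : (p:ℕ) = m-1 := by omega
    rw [if_pos hp, if_pos hp']
    have hwp : (w ^ (p:ℕ))⁻¹ = w ^ ((1:ℤ)-m) := by
      rw [← zpow_natCast w (p:ℕ), ← zpow_neg]
      congr 1
      omega
    rw [hwp]
  · have hp' : (p:ℕ) ≠ m-1 := by have := p.2; omega
    rw [if_neg hp, if_neg hp']
    ring
end

section
/- Let m ≥ 1, let λ_1, …, λ_m : I → ℝ be C^1 functions on an interval I that are pairwise distinct at each t ∈ I, let w ≠ 0 be a fixed real number, and let H(t) be the m×m matrix with entries H(t)_{pq} = λ_q(t)^{p−1} w^{1−p}. Then the entries e_{pq}(t) of the matrix H(t)^{−1} (d/dt)H(t) are: e_{pp}(t) = −λ_p'(t) Σ_{i=1, i≠p}^m 1/(λ_i(t) − λ_p(t)) on the diagonal, and e_{pq}(t) = −λ_q'(t) · ∏_{i=1, i≠p,q}^m (λ_i(t) − λ_q(t)) / ∏_{i=1, i≠p}^m (λ_i(t) − λ_p(t)) for p ≠ q. -/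
open Finset
open scoped BigOperators
open Polynomial

lemma derivative_finset_prod' {ι : Type*} [DecidableEq ι] (s : Finset ι) (f : ι → ℝ[X]) :
    derivative (∏ i ∈ s, f i) = ∑ i ∈ s, (∏ j ∈ s.erase i, f j) * derivative (f i) := by
  induction s using Finset.induction with
  | empty => simp
  | @insert a s ha ih =>
    have hsum : ∑ x ∈ s, (∏ j ∈ (insert a s).erase x, f j) * derivative (f x)
        = f a * ∑ x ∈ s, (∏ j ∈ s.erase x, f j) * derivative (f x) := by
      rw [Finset.mul_sum]
      refine Finset.sum_congr rfl fun i hi => ?_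
      have hia : i ≠ a := fun h => ha (h ▸ hi)
      rw [Finset.erase_insert_of_ne hia.symm,
        Finset.prod_insert (fun h => ha (Finset.mem_of_mem_erase h)), mul_assoc]
    rw [Finset.prod_insert ha, derivative_mul, ih, Finset.sum_insert ha,
      Finset.erase_insert ha, hsum]
    ring

lemma basis_eq {m : ℕ} (v : Fin m → ℝ) (r : Fin m) :
    Lagrange.basis Finset.univ v r
      = C ((∏ j ∈ Finset.univ.erase r, (v r - v j))⁻¹)
        * ∏ j ∈ Finset.univ.erase r, (X - C (v j)) := by
  unfold Lagrange.basis Lagrange.basisDivisor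
  rw [Finset.prod_mul_distrib, ← map_prod, ← Finset.prod_inv_distrib]

lemma eval_deriv_nodal_ne {m : ℕ} (v : Fin m → ℝ) (r q : Fin m) (hq : q ≠ r) :
    eval (v q) (derivative (∏ j ∈ Finset.univ.erase r, (X - C (v j))))
      = ∏ j ∈ (Finset.univ.erase r).erase q, (v q - v j) := by
  rw [derivative_finset_prod']
  simp only [derivative_sub, derivative_X, derivative_C, sub_zero, mul_one]
  rw [eval_finset_sum]
  rw [Finset.sum_eq_single q]
  · simp [eval_prod]
  · intro i hi hiq
    rw [eval_prod]
    apply Finset.prod_eq_zero (i := q)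
    · exact Finset.mem_erase.mpr ⟨Ne.symm hiq, Finset.mem_erase.mpr ⟨hq, Finset.mem_univ q⟩⟩
    · simp
  · intro h
    exact absurd (Finset.mem_erase.mpr ⟨hq, Finset.mem_univ q⟩) h

lemma eval_deriv_nodal_self {m : ℕ} (v : Fin m → ℝ) (r : Fin m) :
    eval (v r) (derivative (∏ j ∈ Finset.univ.erase r, (X - C (v j))))
      = ∑ i ∈ Finset.univ.erase r, ∏ j ∈ (Finset.univ.erase r).erase i, (v r - v j) := by
  rw [derivative_finset_prod']
  simp only [derivative_sub, derivative_X, derivative_C, sub_zero, mul_one]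
  rw [eval_finset_sum]
  refine Finset.sum_congr rfl fun i hi => by simp [eval_prod]

lemma keysum {m : ℕ} (v : Fin m → ℝ) (hv : Function.Injective v) (p q : Fin m) :
    ∑ r : Fin m, v r ^ (p:ℕ) * eval (v q) (derivative (Lagrange.basis Finset.univ v r))
      = (p:ℝ) * v q ^ ((p:ℕ)-1) := by
  have hdeg : ((X:ℝ[X]) ^ (p:ℕ)).degree < (Finset.univ : Finset (Fin m)).card := by
    rw [degree_X_pow, Finset.card_univ, Fintype.card_fin]
    exact_mod_cast p.isLt
  have h := Lagrange.eq_interpolate (v := v) (s := Finset.univ) hv.injOn hdeg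
  have h2 := congrArg (fun f => eval (v q) (derivative f)) h
  simp only [Lagrange.interpolate_apply] at h2
  rw [derivative_sum] at h2
  simp only [eval_finset_sum, derivative_C_mul, eval_mul, eval_C, eval_pow, eval_X,
    derivative_X_pow, Nat.cast_id] at h2
  rw [← h2]

lemma prod_neg_sub {m : ℕ} (s : Finset (Fin m)) (f : Fin m → ℝ) (x : ℝ) :
    ∏ i ∈ s, (x - f i) = (-1:ℝ)^s.card * ∏ i ∈ s, (f i - x) := by
  rw [← Finset.prod_const (-1:ℝ), ← Finset.prod_mul_distrib]
  exact Finset.prod_congr rfl fun i _ => by ring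

lemma eval_deriv_basis_self {m : ℕ} (v : Fin m → ℝ) (hv : Function.Injective v) (p : Fin m) :
    eval (v p) (derivative (Lagrange.basis Finset.univ v p))
      = -∑ i ∈ Finset.univ.erase p, (v i - v p)⁻¹ := by
  rw [basis_eq, derivative_C_mul, eval_mul, eval_C, eval_deriv_nodal_self, Finset.mul_sum,
    ← Finset.sum_neg_distrib]
  refine Finset.sum_congr rfl fun i hi => ?_
  have hB : ∏ j ∈ (Finset.univ.erase p).erase i, (v p - v j) ≠ 0 :=
    Finset.prod_ne_zero_iff.mpr (fun j hj => sub_ne_zero.mpr fun h =>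
      (Finset.mem_erase.mp (Finset.mem_of_mem_erase hj)).1 (hv h).symm)
  rw [← Finset.mul_prod_erase _ _ hi, mul_inv, mul_assoc, inv_mul_cancel₀ hB, mul_one,
    ← neg_sub (v i) (v p), inv_neg]

lemma eval_deriv_basis_ne {m : ℕ} (v : Fin m → ℝ) (hv : Function.Injective v) (p q : Fin m)
    (hpq : p ≠ q) :
    eval (v q) (derivative (Lagrange.basis Finset.univ v p))
      = -(∏ i ∈ (Finset.univ.erase p).erase q, (v i - v q))
        * (∏ i ∈ Finset.univ.erase p, (v i - v p))⁻¹ := by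
  rw [basis_eq, derivative_C_mul, eval_mul, eval_C, eval_deriv_nodal_ne v p q (Ne.symm hpq)]
  set s := (Finset.univ : Finset (Fin m)).erase p with hs
  have hqs : q ∈ s := Finset.mem_erase.mpr ⟨Ne.symm hpq, Finset.mem_univ q⟩
  have hcard : s.card = (s.erase q).card + 1 := by
    rw [Finset.card_erase_of_mem hqs]
    exact (Nat.succ_pred_eq_of_pos (Finset.card_pos.mpr ⟨q, hqs⟩)).symm
  rw [prod_neg_sub s v (v p), prod_neg_sub (s.erase q) v (v q), mul_inv, ← inv_pow,
    inv_neg_one, hcard, pow_succ]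
  rcases neg_one_pow_eq_or ℝ (s.erase q).card with h | h <;> rw [h] <;> ring

/-- **Entries of `H⁻¹ (d/dt) H`** (Garetto–Ruzhansky, Proposition, part (v)).
If `λ_1(t),…,λ_m(t)` are `C^1` on an interval `I`, pairwise distinct at each `t ∈ I`,
and `H(t)_{pq} = λ_q(t)^{p-1} w^{1-p}`, then the entries of `H(t)⁻¹ H'(t)` are
`e_{pp} = -λ_p' Σ_{i≠p} (λ_i - λ_p)⁻¹` and, for `p ≠ q`,
`e_{pq} = -λ_q' ∏_{i≠p,q}(λ_i - λ_q) / ∏_{i≠p}(λ_i - λ_p)`. -/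
theorem stmt16 (m : ℕ) (hm : 1 ≤ m) (I : Set ℝ) (hI : I.OrdConnected)
    (lam lam' : Fin m → ℝ → ℝ)
    (hderiv : ∀ i : Fin m, ∀ t ∈ I, HasDerivAt (lam i) (lam' i t) t)
    (hcont : ∀ i : Fin m, ContinuousOn (lam' i) I)
    (hdist : ∀ t ∈ I, ∀ i j : Fin m, i ≠ j → lam i t ≠ lam j t)
    (w : ℝ) (hw : w ≠ 0)
    (H : ℝ → Matrix (Fin m) (Fin m) ℝ)
    (hH : ∀ t : ℝ, ∀ p q : Fin m, H t p q = lam q t ^ (p : ℕ) * (w ^ (p : ℕ))⁻¹)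
    (Hd : ℝ → Matrix (Fin m) (Fin m) ℝ)
    (hHd : ∀ t : ℝ, ∀ p q : Fin m, Hd t p q = deriv (fun u => H u p q) t) :
    ∀ t ∈ I,
      (∀ p : Fin m,
        ((H t)⁻¹ * Hd t) p p
          = -(lam' p t) * ∑ i ∈ Finset.univ.erase p, (lam i t - lam p t)⁻¹)
      ∧ (∀ p q : Fin m, p ≠ q →
        ((H t)⁻¹ * Hd t) p q
          = -(lam' q t) * (∏ i ∈ (Finset.univ.erase p).erase q, (lam i t - lam q t))
            * (∏ i ∈ Finset.univ.erase p, (lam i t - lam p t))⁻¹) := by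
  intro t ht
  set v : Fin m → ℝ := fun i => lam i t with hvdef
  have hvinj : Function.Injective v := by
    intro i j h
    by_contra hne
    exact hdist t ht i j hne h
  -- derivative entries
  have hHdval : ∀ p q : Fin m,
      Hd t p q = ((p:ℝ) * v q ^ ((p:ℕ)-1) * lam' q t) * (w ^ (p:ℕ))⁻¹ := by
    intro p q
    rw [hHd]
    have hfun : (fun u => H u p q) = fun u => lam q u ^ (p:ℕ) * (w ^ (p:ℕ))⁻¹ :=
      funext fun u => hH u p q
    rw [hfun]
    exact (((hderiv q t ht).pow _).mul_const _).deriv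
  -- invertibility
  have hdet : IsUnit (H t).det := by
    have hform : H t = Matrix.diagonal (fun p : Fin m => (w ^ (p:ℕ))⁻¹)
        * (Matrix.vandermonde v).transpose := by
      ext p q
      rw [Matrix.diagonal_mul, Matrix.transpose_apply, Matrix.vandermonde_apply, hH, mul_comm]
    rw [hform, Matrix.det_mul, Matrix.det_transpose, Matrix.det_diagonal,
      Matrix.det_vandermonde]
    rw [isUnit_iff_ne_zero]
    apply mul_ne_zero
    · exact Finset.prod_ne_zero_iff.mpr fun p _ => inv_ne_zero (pow_ne_zero _ hw)
    · refine Finset.prod_ne_zero_iff.mpr fun i _ => Finset.prod_ne_zero_iff.mpr fun j hj => ?_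
      have hij : i ≠ j := Ne.symm (Finset.mem_Ioi.mp hj).ne'
      exact sub_ne_zero.mpr fun h => hij (hvinj h.symm)
  -- the candidate matrix
  set E : Matrix (Fin m) (Fin m) ℝ := Matrix.of fun r q =>
    lam' q t * eval (v q) (derivative (Lagrange.basis Finset.univ v r)) with hEdef
  have hmul : H t * E = Hd t := by
    ext p q
    rw [Matrix.mul_apply, hHdval]
    have hterm : ∀ r : Fin m, H t p r * E r q
        = ((w ^ (p:ℕ))⁻¹ * lam' q t)
          * (v r ^ (p:ℕ) * eval (v q) (derivative (Lagrange.basis Finset.univ v r))) := by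
      intro r
      rw [hH, hEdef, Matrix.of_apply]
      ring
    rw [Finset.sum_congr rfl fun r _ => hterm r, ← Finset.mul_sum, keysum v hvinj p q]
    ring
  have hE : (H t)⁻¹ * Hd t = E := by
    rw [← hmul, ← Matrix.mul_assoc, Matrix.nonsing_inv_mul _ hdet, Matrix.one_mul]
  rw [hE]
  constructor
  · intro p
    rw [hEdef, Matrix.of_apply, eval_deriv_basis_self v hvinj p]
    ring
  · intro p q hpq
    rw [hEdef, Matrix.of_apply, eval_deriv_basis_ne v hvinj p q hpq]
    ring
end

section
/- Let m ≥ 1, 0 < α ≤ 1, c > 0, and let τ_1, …, τ_m : ℝ × ℝ^n → ℝ satisfy τ_1(t,ξ) ≤ τ_2(t,ξ) ≤ … ≤ τ_m(t,ξ) for all (t,ξ) and |τ_k(t,ξ) − τ_k(s,ξ)| ≤ c |ξ| |t−s|^α for all k, all t,s ∈ ℝ and all ξ. Let φ ∈ C_c^∞(ℝ) with φ ≥ 0 and ∫_ℝ φ = 1, let φ_ε(s) = ε^{−1}φ(s/ε) for ε ∈ (0,1), and define λ_j(t,ξ) = (τ_j(·,ξ) ∗ φ_ε)(t) + j ε^α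 ⟨ξ⟩ for j = 1, …, m. Then there exists a constant c' > 0, depending only on c, α, m and φ, such that for all t ∈ ℝ, all ξ ∈ ℝ^n and all ε ∈ (0,1): (i) each λ_j(·,ξ) is differentiable in t with |∂_t λ_j(t,ξ)| ≤ c' ε^{α−1} ⟨ξ⟩; (ii) |λ_j(t,ξ) − τ_j(t,ξ)| ≤ c' ε^α ⟨ξ⟩; (iii) λ_j(t,ξ) − λ_i(t,ξ) ≥ ε^α ⟨ξ⟩ whenever j > i. -/
open MeasureTheory Finset
open scoped BigOperators

noncomputable section

/-- The Euclidean norm `|ξ|` on `ℝ^n`. -/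
def enorm' (n : ℕ) (ξ : Fin n → ℝ) : ℝ := Real.sqrt (∑ i, ξ i ^ 2)

/-- The Japanese bracket `⟨ξ⟩ = (1+|ξ|²)^{1/2}`. -/
def jap (n : ℕ) (ξ : Fin n → ℝ) : ℝ := Real.sqrt (1 + ∑ i, ξ i ^ 2)

lemma cont_of_holder17 {f : ℝ → ℝ} {M α : ℝ} (hα : 0 < α)
    (h : ∀ t u : ℝ, |f t - f u| ≤ M * |t - u| ^ α) : Continuous f := by
  rw [continuous_iff_continuousAt]
  intro u
  rw [ContinuousAt, tendsto_iff_dist_tendsto_zero]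
  have hb : Filter.Tendsto (fun t : ℝ => M * |t - u| ^ α) (nhds u) (nhds 0) := by
    have h1 : Filter.Tendsto (fun t : ℝ => |t - u|) (nhds u) (nhds 0) := by
      have : Continuous fun t : ℝ => |t - u| := (continuous_id.sub continuous_const).abs
      simpa using this.tendsto u
    have h2 : Filter.Tendsto (fun x : ℝ => x ^ α) (nhds 0) (nhds 0) := by
      have := Real.continuousAt_rpow_const 0 α (Or.inr hα.le)
      simpa [Real.zero_rpow hα.ne'] using this.tendsto
    simpa using ((h2.comp h1).const_mul M)
  refine squeeze_zero (fun t => dist_nonneg) (fun t => ?_) hb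
  rw [Real.dist_eq]; exact h t u

lemma change_var17 (f : ℝ → ℝ) (t ε : ℝ) (hε : 0 < ε) :
    ∫ u, f (t - ε * u) = ε⁻¹ * ∫ s, f s := by
  have h1 : (∫ u : ℝ, f (t - ε * u)) = ∫ u : ℝ, (fun v => f (t - v)) (ε * u) := rfl
  rw [h1, Measure.integral_comp_mul_left (fun v => f (t - v)) ε,
    integral_sub_left_eq_self f _ t, abs_of_pos (inv_pos.2 hε), smul_eq_mul]

lemma change_var17' (g : ℝ → ℝ) (t ε : ℝ) (hε : 0 < ε) :
    ∫ s, g ((t - s) / ε) = ε * ∫ u, g u := by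
  have h := change_var17 (fun s => g ((t - s) / ε)) t ε hε
  have h2 : ∀ u : ℝ, (t - (t - ε * u)) / ε = u := fun u => by
    rw [show t - (t - ε * u) = ε * u by ring, mul_div_cancel_left₀ u hε.ne']
  simp only [h2] at h
  rw [h, ← mul_assoc, mul_inv_cancel₀ hε.ne', one_mul]

set_option maxHeartbeats 2000000

/-- **Regularisation of the characteristic roots, Case 1** (Garetto–Ruzhansky,
Proposition 5).  Let `τ_1 ≤ … ≤ τ_m` be `C^α`-in-time roots and let
`λ_j = τ_j(·,ξ) ∗ φ_ε + j ε^α ⟨ξ⟩` be their mollified and separated approximations.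
Then, with a constant depending only on `c, α, m, φ`:
(i) `|∂_t λ_j| ≤ c' ε^{α-1} ⟨ξ⟩`; (ii) `|λ_j - τ_j| ≤ c' ε^α ⟨ξ⟩`;
(iii) `λ_j - λ_i ≥ ε^α ⟨ξ⟩` for `j > i`. -/
theorem stmt17 (n m : ℕ) (hm : 1 ≤ m) (α c : ℝ)
    (hα0 : 0 < α) (hα1 : α ≤ 1) (hc : 0 < c)
    (τ : Fin m → ℝ → (Fin n → ℝ) → ℝ)
    (hord : ∀ (t : ℝ) (ξ : Fin n → ℝ), ∀ k k' : Fin m, k ≤ k' → τ k t ξ ≤ τ k' t ξ)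
    (hHolder : ∀ (k : Fin m) (t u : ℝ) (ξ : Fin n → ℝ),
      |τ k t ξ - τ k u ξ| ≤ c * enorm' n ξ * |t - u| ^ α)
    (φ : ℝ → ℝ) (hφs : ContDiff ℝ (⊤ : ℕ∞) φ) (hφc : HasCompactSupport φ)
    (hφ0 : ∀ x, 0 ≤ φ x) (hφ1 : ∫ x, φ x = 1)
    (lam : ℝ → Fin m → ℝ → (Fin n → ℝ) → ℝ)
    (hlam : ∀ (ε : ℝ) (j : Fin m) (t : ℝ) (ξ : Fin n → ℝ),
      lam ε j t ξ = (∫ u, τ j (t - ε * u) ξ * φ u) + ((j : ℕ) + 1) * ε ^ α * jap n ξ) :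
    ∃ c' > 0, ∀ ε : ℝ, 0 < ε → ε < 1 → ∀ (t : ℝ) (ξ : Fin n → ℝ),
      (∀ j : Fin m, ∃ d : ℝ, HasDerivAt (fun u => lam ε j u ξ) d t
        ∧ |d| ≤ c' * ε ^ (α - 1) * jap n ξ)
      ∧ (∀ j : Fin m, |lam ε j t ξ - τ j t ξ| ≤ c' * ε ^ α * jap n ξ)
      ∧ (∀ i j : Fin m, i < j → ε ^ α * jap n ξ ≤ lam ε j t ξ - lam ε i t ξ) := by
  -- basic continuity facts about φ
  have hφcont : Continuous φ := hφs.continuous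
  have hderφ : Continuous (deriv φ) := hφs.continuous_deriv (by simp)
  have hφcd : HasCompactSupport (deriv φ) := hφc.deriv
  have hφint : Integrable φ := hφcont.integrable_of_hasCompactSupport hφc
  have hderφint : Integrable (deriv φ) := hderφ.integrable_of_hasCompactSupport hφcd
  have hintderφ : (∫ x, deriv φ x) = 0 :=
    integral_eq_zero_of_hasDerivAt_of_integrable
      (fun x => (hφs.differentiable (by simp) x).hasDerivAt) hderφint hφint
  -- |u|^α is continuous
  have hcontpow : Continuous fun u : ℝ => |u| ^ α := by
    rw [continuous_iff_continuousAt]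
    intro x
    exact continuous_abs.continuousAt.rpow_const (Or.inr hα0.le)
  obtain ⟨C0, hC0⟩ : ∃ C0 : ℝ, C0 = ∫ u, |u| ^ α * φ u := ⟨_, rfl⟩
  obtain ⟨C1, hC1⟩ : ∃ C1 : ℝ, C1 = ∫ u, |u| ^ α * |deriv φ u| := ⟨_, rfl⟩
  have hC0int : Integrable fun u : ℝ => |u| ^ α * φ u :=
    (hcontpow.mul hφcont).integrable_of_hasCompactSupport hφc.mul_left
  have hC1int : Integrable fun u : ℝ => |u| ^ α * |deriv φ u| :=
    (hcontpow.mul hderφ.abs).integrable_of_hasCompactSupport hφcd.abs.mul_left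
  have hC0pos : 0 ≤ C0 := hC0 ▸ integral_nonneg fun u =>
    mul_nonneg (Real.rpow_nonneg (abs_nonneg u) α) (hφ0 u)
  have hC1pos : 0 ≤ C1 := hC1 ▸ integral_nonneg fun u =>
    mul_nonneg (Real.rpow_nonneg (abs_nonneg u) α) (abs_nonneg _)
  refine ⟨c * (C0 + C1) + m + 1, by positivity, ?_⟩
  intro ε hε hε1 t ξ
  obtain ⟨E, hEdef⟩ : ∃ E : ℝ, E = enorm' n ξ := ⟨_, rfl⟩
  have hHolderE : ∀ (k : Fin m) (x u : ℝ), |τ k x ξ - τ k u ξ| ≤ c * E * |x - u| ^ α :=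
    fun k x u => hEdef ▸ hHolder k x u ξ
  have hE0 : 0 ≤ E := hEdef ▸ Real.sqrt_nonneg _
  have hsum0 : 0 ≤ ∑ i, ξ i ^ 2 := Finset.sum_nonneg fun i _ => sq_nonneg _
  have hjap1 : 1 ≤ jap n ξ := by
    have := Real.sqrt_le_sqrt (show (1:ℝ) ≤ 1 + ∑ i, ξ i ^ 2 by linarith)
    simpa [jap] using this
  have hjap0 : 0 < jap n ξ := lt_of_lt_of_le one_pos hjap1
  have hEjap : E ≤ jap n ξ := by
    rw [hEdef, enorm', jap]
    exact Real.sqrt_le_sqrt (by linarith)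
  have hτc : ∀ k : Fin m, Continuous fun s => τ k s ξ := fun k =>
    cont_of_holder17 hα0 fun a b => hHolderE k a b
  have hεα : 0 < ε ^ α := Real.rpow_pos_of_pos hε α
  -- Hölder bound specialized
  have hHo : ∀ (k : Fin m) (x u : ℝ), |τ k (x - ε * u) ξ - τ k x ξ| ≤ c * E * (ε ^ α * |u| ^ α) := by
    intro k x u
    have h := hHolderE k (x - ε * u) x
    have h2 : |x - ε * u - x| = ε * |u| := by
      rw [show x - ε * u - x = -(ε * u) by ring, abs_neg, abs_mul, abs_of_pos hε]
    rw [h2, Real.mul_rpow hε.le (abs_nonneg u)] at h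
    exact h
  -- compact support transported through the affine change of variable
  have hsupp : ∀ (ψ : ℝ → ℝ), HasCompactSupport ψ → ∀ x : ℝ,
      HasCompactSupport fun s => ψ ((x - s) / ε) := by
    intro ψ hψ x
    have h := hψ.comp_homeomorph
      ((Homeomorph.subLeft x).trans (Homeomorph.mulRight₀ ε⁻¹ (inv_ne_zero hε.ne')))
    have : (fun s : ℝ => ψ ((x - s) / ε)) =
        ψ ∘ ((Homeomorph.subLeft x).trans (Homeomorph.mulRight₀ ε⁻¹ (inv_ne_zero hε.ne'))) := by
      funext s
      show ψ ((x - s) / ε) = ψ ((x - s) * ε⁻¹)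
      rw [div_eq_mul_inv]
    rw [this]
    exact h
  -- integrability of the mollified integrand
  have hint1 : ∀ (j : Fin m) (x : ℝ), Integrable fun u => τ j (x - ε * u) ξ * φ u := by
    intro j x
    refine (((hτc j).comp (by continuity)).mul hφcont).integrable_of_hasCompactSupport
      hφc.mul_left
  -- Part (ii) estimate
  have key2 : ∀ j : Fin m,
      |(∫ u, τ j (t - ε * u) ξ * φ u) - τ j t ξ| ≤ c * E * ε ^ α * C0 := by
    intro j
    have heq : (∫ u, τ j (t - ε * u) ξ * φ u) - τ j t ξ
        = ∫ u, (τ j (t - ε * u) ξ - τ j t ξ) * φ u := by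
      have h4 : (∫ u, (τ j (t - ε * u) ξ - τ j t ξ) * φ u)
          = (∫ u, τ j (t - ε * u) ξ * φ u) - ∫ u, τ j t ξ * φ u := by
        rw [← integral_sub (hint1 j t) (hφint.const_mul _)]
        simp [sub_mul]
      rw [h4, integral_const_mul, hφ1, mul_one]
    rw [heq]
    have hb : ∀ u : ℝ, ‖(τ j (t - ε * u) ξ - τ j t ξ) * φ u‖
        ≤ (c * E * ε ^ α) * (|u| ^ α * φ u) := by
      intro u
      rw [Real.norm_eq_abs, abs_mul, abs_of_nonneg (hφ0 u)]
      have := hHo j t u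
      have h2 : |τ j (t - ε * u) ξ - τ j t ξ| * φ u ≤ (c * E * (ε ^ α * |u| ^ α)) * φ u :=
        mul_le_mul_of_nonneg_right this (hφ0 u)
      calc |τ j (t - ε * u) ξ - τ j t ξ| * φ u
          ≤ (c * E * (ε ^ α * |u| ^ α)) * φ u := h2
        _ = (c * E * ε ^ α) * (|u| ^ α * φ u) := by ring
    have := norm_integral_le_of_norm_le (hC0int.const_mul (c * E * ε ^ α))
      (Filter.Eventually.of_forall hb)
    rw [integral_const_mul] at this
    rw [← Real.norm_eq_abs]
    exact this.trans (le_of_eq (by rw [hC0]))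
  refine ⟨?_, ?_, ?_⟩
  · -- Part (i): derivative
    intro j
    set F : ℝ → ℝ → ℝ := fun x s => τ j s ξ * φ ((x - s) / ε) with hF
    set F' : ℝ → ℝ → ℝ := fun x s => τ j s ξ * (deriv φ ((x - s) / ε) * ε⁻¹) with hF'
    -- radius of the support of deriv φ
    obtain ⟨R, hR0, hRsub⟩ : ∃ R, 0 < R ∧ tsupport (deriv φ) ⊆ Metric.closedBall 0 R :=
      hφcd.isBounded.subset_closedBall_lt 0 0
    obtain ⟨Mφ', hMφ'⟩ : ∃ M, ∀ y, |deriv φ y| ≤ M := by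
      obtain ⟨M, hM⟩ := hφcd.exists_bound_of_continuous hderφ
      exact ⟨M, fun y => by simpa [Real.norm_eq_abs] using hM y⟩
    have hMφ'0 : 0 ≤ Mφ' := le_trans (abs_nonneg _) (hMφ' 0)
    obtain ⟨Mτ, hMτ⟩ : ∃ M, ∀ s ∈ Metric.closedBall t (R + 1), |τ j s ξ| ≤ M := by
      obtain ⟨M, hM⟩ := (isCompact_closedBall t (R + 1)).exists_bound_of_continuousOn
        (hτc j).continuousOn
      exact ⟨M, fun s hs => by simpa [Real.norm_eq_abs] using hM s hs⟩
    have hMτ0 : 0 ≤ Mτ := le_trans (abs_nonneg _)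
      (hMτ t (Metric.mem_closedBall_self (by linarith)))
    set bound : ℝ → ℝ :=
      (Metric.closedBall t (R + 1)).indicator fun _ => Mτ * (Mφ' * ε⁻¹) with hbound
    have hcontaffine : ∀ x : ℝ, Continuous fun s : ℝ => (x - s) / ε := fun x =>
      (continuous_const.sub continuous_id).div_const ε
    have hF_meas : ∀ᶠ x in nhds t, AEStronglyMeasurable (F x) volume :=
      Filter.Eventually.of_forall fun x =>
        ((hτc j).mul (hφcont.comp (hcontaffine x))).aestronglyMeasurable
    have hF_int : Integrable (F t) :=
      ((hτc j).mul (hφcont.comp (hcontaffine t))).integrable_of_hasCompactSupport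
        (hsupp φ hφc t).mul_left
    have hF'_meas : AEStronglyMeasurable (F' t) volume :=
      ((hτc j).mul ((hderφ.comp (hcontaffine t)).mul continuous_const)).aestronglyMeasurable
    have h_bound : ∀ᵐ s : ℝ, ∀ x ∈ Metric.ball t 1, ‖F' x s‖ ≤ bound s := by
      refine Filter.Eventually.of_forall fun s => fun x hx => ?_
      by_cases hz : deriv φ ((x - s) / ε) = 0
      · simp only [hF', hz, mul_zero, zero_mul, norm_zero]
        exact Set.indicator_nonneg (fun _ _ => by positivity) s
      · have hmem : (x - s) / ε ∈ tsupport (deriv φ) :=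
          subset_tsupport _ (Function.mem_support.2 hz)
        have h1 : |x - s| / ε ≤ R := by
          have := hRsub hmem
          simpa [Real.dist_eq, abs_div, abs_of_pos hε] using this
        have h2 : |x - s| ≤ R := by
          rw [div_le_iff₀ hε] at h1
          nlinarith
        have hsball : s ∈ Metric.closedBall t (R + 1) := by
          rw [Metric.mem_closedBall, Real.dist_eq]
          have hxt : |x - t| ≤ 1 := le_of_lt (by simpa [Real.dist_eq] using hx)
          calc |s - t| = |(s - x) + (x - t)| := by ring_nf
            _ ≤ |s - x| + |x - t| := abs_add_le _ _
            _ ≤ R + 1 := add_le_add (by rwa [abs_sub_comm]) hxt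
        rw [hbound, Set.indicator_of_mem hsball]
        rw [hF', Real.norm_eq_abs, abs_mul, abs_mul, abs_inv, abs_of_pos hε]
        exact mul_le_mul (hMτ s hsball)
          (mul_le_mul_of_nonneg_right (hMφ' _) (by positivity))
          (by positivity) hMτ0
    have bound_int : Integrable bound := by
      rw [hbound]
      refine (IntegrableOn.integrable_indicator ?_ measurableSet_closedBall)
      exact integrableOn_const measure_closedBall_lt_top.ne
    have h_diff : ∀ᵐ s : ℝ, ∀ x ∈ Metric.ball t 1, HasDerivAt (F · s) (F' x s) x := by
      refine Filter.Eventually.of_forall fun s => fun x _ => ?_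
      have h1 : HasDerivAt (fun x : ℝ => (x - s) / ε) ε⁻¹ x := by
        simpa [one_div] using ((hasDerivAt_id x).sub_const s).div_const ε
      have h2 : HasDerivAt φ (deriv φ ((x - s) / ε)) ((x - s) / ε) :=
        (hφs.differentiable (by simp) _).hasDerivAt
      have h3 := h2.comp x h1
      simpa [hF, hF', Function.comp] using h3.const_mul (τ j s ξ)
    obtain ⟨hF'int, hFderiv⟩ := hasDerivAt_integral_of_dominated_loc_of_deriv_le
      (Metric.ball_mem_nhds t one_pos) hF_meas hF_int hF'_meas h_bound bound_int h_diff
    set dF : ℝ := ∫ s, F' t s with hdF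
    -- rewrite lam as ε⁻¹ * ∫ F + const
    have heq : (fun u => lam ε j u ξ)
        = fun u => ε⁻¹ * (∫ s, F u s) + ((j : ℕ) + 1) * ε ^ α * jap n ξ := by
      funext u
      rw [hlam]
      congr 1
      rw [← change_var17 (fun s => F u s) u ε hε]
      congr 1
      funext v
      rw [hF]
      congr 2
      rw [show u - (u - ε * v) = ε * v by ring, mul_div_cancel_left₀ v hε.ne']
    refine ⟨ε⁻¹ * dF, ?_, ?_⟩
    · rw [heq]
      exact (hFderiv.const_mul ε⁻¹).add_const _
    · -- bound on the derivative
      have hzero : (∫ s, τ j t ξ * (deriv φ ((t - s) / ε) * ε⁻¹)) = 0 := by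
        have hpt : ∀ s : ℝ, τ j t ξ * (deriv φ ((t - s) / ε) * ε⁻¹)
            = (τ j t ξ * ε⁻¹) * (fun y => deriv φ y) ((t - s) / ε) := fun s => by ring
        simp only [hpt]
        rw [integral_const_mul, change_var17' (fun y => deriv φ y) t ε hε, hintderφ,
          mul_zero, mul_zero]
      have hconstint : Integrable fun s => τ j t ξ * (deriv φ ((t - s) / ε) * ε⁻¹) := by
        refine (continuous_const.mul ((hderφ.comp (hcontaffine t)).mul
          continuous_const)).integrable_of_hasCompactSupport ?_
        exact ((hsupp (deriv φ) hφcd t).mul_right).mul_left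
      have hdFeq : dF = ∫ s, (τ j s ξ - τ j t ξ) * (deriv φ ((t - s) / ε) * ε⁻¹) := by
        rw [hdF]
        have : ∀ s : ℝ, (τ j s ξ - τ j t ξ) * (deriv φ ((t - s) / ε) * ε⁻¹)
            = F' t s - τ j t ξ * (deriv φ ((t - s) / ε) * ε⁻¹) := fun s => by
          rw [hF']; ring
        simp only [this]
        rw [integral_sub hF'int hconstint, hzero, sub_zero]
      -- the dominating function
      set hfun : ℝ → ℝ := fun y => ε ^ α * (|y| ^ α * |deriv φ y|) with hh
      have hhcont : Continuous hfun := continuous_const.mul (hcontpow.mul hderφ.abs)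
      have hhcs : HasCompactSupport hfun := by
        have h1 : HasCompactSupport fun y : ℝ => |deriv φ y| := hφcd.abs
        have h2 : HasCompactSupport fun y : ℝ => |y| ^ α * |deriv φ y| := h1.mul_left
        exact h2.mul_left
      have hGint : Integrable fun s => (c * E * ε⁻¹) * hfun ((t - s) / ε) :=
        ((hhcont.comp (hcontaffine t)).integrable_of_hasCompactSupport
          (hsupp hfun hhcs t)).const_mul _
      have hptb : ∀ s : ℝ, ‖(τ j s ξ - τ j t ξ) * (deriv φ ((t - s) / ε) * ε⁻¹)‖
          ≤ (c * E * ε⁻¹) * hfun ((t - s) / ε) := by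
        intro s
        rw [Real.norm_eq_abs, abs_mul, abs_mul, abs_inv, abs_of_pos hε]
        have hτb : |τ j s ξ - τ j t ξ| ≤ c * E * |s - t| ^ α := hHolderE j s t
        have hkey : hfun ((t - s) / ε) = |s - t| ^ α * |deriv φ ((t - s) / ε)| := by
          rw [hh]
          have e : |(t - s) / ε| ^ α = |s - t| ^ α / ε ^ α := by
            rw [abs_div, abs_of_pos hε, Real.div_rpow (abs_nonneg _) hε.le, abs_sub_comm]
          simp only [e]
          field_simp
        rw [hkey]
        calc |τ j s ξ - τ j t ξ| * (|deriv φ ((t - s) / ε)| * ε⁻¹)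
            ≤ (c * E * |s - t| ^ α) * (|deriv φ ((t - s) / ε)| * ε⁻¹) :=
              mul_le_mul_of_nonneg_right hτb (by positivity)
          _ = (c * E * ε⁻¹) * (|s - t| ^ α * |deriv φ ((t - s) / ε)|) := by ring
      have hnorm : ‖dF‖ ≤ ∫ s, (c * E * ε⁻¹) * hfun ((t - s) / ε) := by
        rw [hdFeq]
        exact norm_integral_le_of_norm_le hGint (Filter.Eventually.of_forall hptb)
      have hhval : (∫ u, hfun u) = ε ^ α * C1 := by
        rw [hh, hC1]
        exact integral_const_mul _ _
      have hGval : (∫ s, (c * E * ε⁻¹) * hfun ((t - s) / ε))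
          = c * E * ε⁻¹ * (ε * (ε ^ α * C1)) := by
        rw [integral_const_mul, change_var17' hfun t ε hε, hhval]
      have habs : |ε⁻¹ * dF| ≤ ε⁻¹ * (c * E * ε⁻¹ * (ε * (ε ^ α * C1))) := by
        rw [abs_mul, abs_of_pos (inv_pos.2 hε)]
        refine mul_le_mul_of_nonneg_left ?_ (by positivity)
        rw [← Real.norm_eq_abs]
        exact hnorm.trans (le_of_eq hGval)
      have hrp : ε ^ (α - 1) = ε ^ α / ε := by
        rw [Real.rpow_sub hε, Real.rpow_one]
      have hsimp : ε⁻¹ * (c * E * ε⁻¹ * (ε * (ε ^ α * C1))) = c * C1 * E * ε ^ (α - 1) := by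
        rw [hrp]
        field_simp
      have hrppos : 0 < ε ^ (α - 1) := Real.rpow_pos_of_pos hε _
      rw [hsimp] at habs
      refine habs.trans ?_
      have ha : c * C1 * E ≤ c * C1 * jap n ξ :=
        mul_le_mul_of_nonneg_left hEjap (by positivity)
      have hb : c * C1 * jap n ξ ≤ (c * (C0 + C1) + m + 1) * jap n ξ := by
        refine mul_le_mul_of_nonneg_right ?_ hjap0.le
        nlinarith
      calc c * C1 * E * ε ^ (α - 1)
          ≤ ((c * (C0 + C1) + m + 1) * jap n ξ) * ε ^ (α - 1) :=
            mul_le_mul_of_nonneg_right (ha.trans hb) hrppos.le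
        _ = (c * (C0 + C1) + m + 1) * ε ^ (α - 1) * jap n ξ := by ring
  · -- Part (ii)
    intro j
    rw [hlam]
    have hjm : ((j : ℕ) : ℝ) + 1 ≤ (m : ℝ) := by
      have := j.isLt
      exact_mod_cast Nat.succ_le_of_lt this
    have h1 : |(∫ u, τ j (t - ε * u) ξ * φ u) + ((j : ℕ) + 1) * ε ^ α * jap n ξ - τ j t ξ|
        ≤ c * E * ε ^ α * C0 + ((j : ℕ) + 1) * ε ^ α * jap n ξ := by
      have h2 := key2 j
      have h3 : (0:ℝ) ≤ ((j : ℕ) + 1) * ε ^ α * jap n ξ := by positivity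
      calc |(∫ u, τ j (t - ε * u) ξ * φ u) + ((j : ℕ) + 1) * ε ^ α * jap n ξ - τ j t ξ|
          ≤ |(∫ u, τ j (t - ε * u) ξ * φ u) - τ j t ξ| + |((j : ℕ) + 1) * ε ^ α * jap n ξ| := by
            rw [show (∫ u, τ j (t - ε * u) ξ * φ u) + ((j : ℕ) + 1) * ε ^ α * jap n ξ - τ j t ξ
              = ((∫ u, τ j (t - ε * u) ξ * φ u) - τ j t ξ) + ((j : ℕ) + 1) * ε ^ α * jap n ξ
              by ring]
            exact abs_add_le _ _
        _ ≤ c * E * ε ^ α * C0 + ((j : ℕ) + 1) * ε ^ α * jap n ξ := by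
            rw [abs_of_nonneg h3]; exact add_le_add_left h2 _
    refine h1.trans ?_
    have e1 : c * E * ε ^ α * C0 ≤ c * C0 * ε ^ α * jap n ξ := by
      have h := mul_le_mul_of_nonneg_left hEjap (show 0 ≤ c * C0 * ε ^ α by positivity)
      nlinarith [h]
    have e2 : (((j : ℕ) : ℝ) + 1) * ε ^ α * jap n ξ ≤ (m : ℝ) * ε ^ α * jap n ξ := by
      have h := mul_le_mul_of_nonneg_right
        (mul_le_mul_of_nonneg_right hjm hεα.le) hjap0.le
      nlinarith [h]
    have e3 : c * C0 * ε ^ α * jap n ξ + (m : ℝ) * ε ^ α * jap n ξ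
        ≤ (c * (C0 + C1) + m + 1) * ε ^ α * jap n ξ := by
      have h1 : 0 ≤ (c * C1 + 1) * (ε ^ α * jap n ξ) := by positivity
      nlinarith [h1]
    linarith
  · -- Part (iii)
    intro i j hij
    rw [hlam, hlam]
    have hij' : ((i : ℕ) : ℝ) + 1 ≤ ((j : ℕ) : ℝ) := by
      exact_mod_cast Nat.succ_le_of_lt hij
    have hIdiff : (∫ u, τ j (t - ε * u) ξ * φ u) - (∫ u, τ i (t - ε * u) ξ * φ u)
        = ∫ u, (τ j (t - ε * u) ξ - τ i (t - ε * u) ξ) * φ u := by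
      rw [← integral_sub (hint1 j t) (hint1 i t)]
      simp [sub_mul]
    have hI0 : 0 ≤ ∫ u, (τ j (t - ε * u) ξ - τ i (t - ε * u) ξ) * φ u :=
      integral_nonneg fun u => mul_nonneg (sub_nonneg.2 (hord _ _ i j hij.le)) (hφ0 u)
    have hcoef : ε ^ α * jap n ξ ≤ (((j : ℕ) : ℝ) - ((i : ℕ) : ℝ)) * (ε ^ α * jap n ξ) := by
      refine le_mul_of_one_le_left (by positivity) (by linarith)
    have hd : 0 ≤ (∫ u, τ j (t - ε * u) ξ * φ u) - ∫ u, τ i (t - ε * u) ξ * φ u := by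
      rw [hIdiff]; exact hI0
    have hco : (((j : ℕ) : ℝ) + 1) * ε ^ α * jap n ξ - (((i : ℕ) : ℝ) + 1) * ε ^ α * jap n ξ
        = (((j : ℕ) : ℝ) - ((i : ℕ) : ℝ)) * (ε ^ α * jap n ξ) := by ring
    linarith [hcoef]


end
end
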